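/- arXiv:1609.05809 — 2 statements merged into one kernel-verified Lean document; each statement's English description precedes it below -/
import Mathlib

section
/- For any spanning tree T and spanning 2-forest F of a connected graph G with disjoint edge sets, there exists an edge e of T such that F + e is a spanning tree of G and T - e is a spanning 2-forest of G. -/
open Finset Matrix
open scoped Classical

variable {V E : Type*}

/-- Two vertices are joined by an edge of the edge set `S`. -/
def adjRel (src tgt : E → V) (S : Finset E) (u v : V) : Prop :=
  ∃ e ∈ S, (src e = u ∧ tgt e = v) ∨ (src e = v ∧ tgt e = u)

/-- Reachability using only edges in `S`. -/
def reach (src tgt : E → V) (S : Finset E) : V → V → Prop :=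
  Relation.EqvGen (adjRel src tgt S)

/-- Number of connected components of the spanning subgraph with edge set `S`. -/
noncomputable def nComp (src tgt : E → V) (S : Finset E) : ℕ :=
  Nat.card (Quotient (Relation.EqvGen.setoid (adjRel src tgt S)))

/-- A spanning tree: connected spanning subgraph with `|V| - 1` edges. -/
def IsSpanningTree (src tgt : E → V) [Fintype V] (S : Finset E) : Prop :=
  nComp src tgt S = 1 ∧ S.card + 1 = Fintype.card V

/-- A spanning 2-forest: spanning subgraph with exactly two connected
components and `|V| - 2` edges (hence acyclic). -/
def IsSpanning2Forest (src tgt : E → V) [Fintype V] (S : Finset E) : Prop :=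
  nComp src tgt S = 2 ∧ S.card + 2 = Fintype.card V

/-- The edges of `S` with both endpoints in `X` (edge set of the induced subgraph `S[X]`). -/
noncomputable def inducedEdges (src tgt : E → V) (S : Finset E) (X : Finset V) : Finset E :=
  S.filter fun e => src e ∈ X ∧ tgt e ∈ X

/-- The induced subgraph `S[X]` is a (spanning) tree on the vertex set `X`. -/
def IsTreeOn (src tgt : E → V) (X : Finset V) (S : Finset E) : Prop :=
  (inducedEdges src tgt S X).card + 1 = X.card ∧
    ∀ u ∈ X, ∀ v ∈ X, reach src tgt (inducedEdges src tgt S X) u v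

/-- `X` is saturated w.r.t. the (multi)graph with all edges `E`:
the induced subgraph has exactly `2|X| - 2` edges. -/
def Saturated (src tgt : E → V) [Fintype E] (X : Finset V) : Prop :=
  X.Nonempty ∧ (inducedEdges src tgt Finset.univ X).card + 2 = 2 * X.card

/- ---------- auxiliary lemmas ---------- -/

lemma reach_mono (src tgt : E → V) {S S' : Finset E} (hss : S ⊆ S') {u v : V}
    (h : reach src tgt S u v) : reach src tgt S' u v :=
  h.mono fun _ _ ⟨f, hf, ho⟩ => ⟨f, hss hf, ho⟩

lemma reach_insert_cases (src tgt : E → V) (e : E) (S : Finset E) {u v : V}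
    (h : reach src tgt (insert e S) u v) :
    reach src tgt S u v ∨
      (reach src tgt S u (src e) ∧ reach src tgt S (tgt e) v) ∨
      (reach src tgt S u (tgt e) ∧ reach src tgt S (src e) v) := by
  induction h with
  | rel x y hxy =>
      obtain ⟨f, hf, hor⟩ := hxy
      rcases Finset.mem_insert.mp hf with rfl | hfS
      · rcases hor with ⟨rfl, rfl⟩ | ⟨rfl, rfl⟩
        · exact Or.inr (Or.inl ⟨Relation.EqvGen.refl _, Relation.EqvGen.refl _⟩)
        · exact Or.inr (Or.inr ⟨Relation.EqvGen.refl _, Relation.EqvGen.refl _⟩)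
      · exact Or.inl (Relation.EqvGen.rel _ _ ⟨f, hfS, hor⟩)
  | refl x => exact Or.inl (Relation.EqvGen.refl x)
  | symm x y _ ih =>
      rcases ih with h | ⟨h1, h2⟩ | ⟨h1, h2⟩
      · exact Or.inl (Relation.EqvGen.symm _ _ h)
      · exact Or.inr (Or.inr ⟨Relation.EqvGen.symm _ _ h2, Relation.EqvGen.symm _ _ h1⟩)
      · exact Or.inr (Or.inl ⟨Relation.EqvGen.symm _ _ h2, Relation.EqvGen.symm _ _ h1⟩)
  | trans x y z _ _ ih1 ih2 =>
      have tr := fun {p q s : V} (h1 : reach src tgt S p q) (h2 : reach src tgt S q s) =>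
        Relation.EqvGen.trans p q s h1 h2
      rcases ih1 with h | ⟨h1, h2⟩ | ⟨h1, h2⟩ <;>
        rcases ih2 with g | ⟨g1, g2⟩ | ⟨g1, g2⟩
      · exact Or.inl (tr h g)
      · exact Or.inr (Or.inl ⟨tr h g1, g2⟩)
      · exact Or.inr (Or.inr ⟨tr h g1, g2⟩)
      · exact Or.inr (Or.inl ⟨h1, tr h2 g⟩)
      · exact Or.inr (Or.inl ⟨h1, g2⟩)
      · exact Or.inl (tr h1 g2)
      · exact Or.inr (Or.inr ⟨h1, tr h2 g⟩)
      · exact Or.inl (tr h1 g2)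
      · exact Or.inr (Or.inr ⟨h1, g2⟩)

lemma nComp_le_insert (src tgt : E → V) [Fintype V] (e : E) (S : Finset E) :
    nComp src tgt S ≤ nComp src tgt (insert e S) + 1 := by
  set s : Setoid V := Relation.EqvGen.setoid (adjRel src tgt S) with hs
  set s' : Setoid V := Relation.EqvGen.setoid (adjRel src tgt (insert e S)) with hs'
  have hwd : ∀ u v : V, s.r u v →
      (if reach src tgt S u (src e) then (none : Option (Quotient s'))
        else some (Quotient.mk s' u)) =
      (if reach src tgt S v (src e) then none else some (Quotient.mk s' v)) := by
    intro u v huv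
    have huv' : reach src tgt S u v := huv
    have h1 : reach src tgt S u (src e) ↔ reach src tgt S v (src e) :=
      ⟨fun h => Relation.EqvGen.trans _ _ _ (Relation.EqvGen.symm _ _ huv') h,
       fun h => Relation.EqvGen.trans _ _ _ huv' h⟩
    by_cases hu : reach src tgt S u (src e)
    · rw [if_pos hu, if_pos (h1.mp hu)]
    · rw [if_neg hu, if_neg fun h => hu (h1.mpr h)]
      exact congrArg some
        (Quotient.sound (reach_mono src tgt (Finset.subset_insert e S) huv'))
  have hinj : Function.Injective (Quotient.lift _ hwd) := by
    intro x y
    refine Quotient.inductionOn₂ x y ?_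
    intro u v h
    simp only [Quotient.lift_mk] at h
    by_cases hu : reach src tgt S u (src e) <;> by_cases hv : reach src tgt S v (src e)
    · exact Quotient.sound (Relation.EqvGen.trans _ _ _ hu (Relation.EqvGen.symm _ _ hv))
    · rw [if_pos hu, if_neg hv] at h; exact absurd h (by simp)
    · rw [if_neg hu, if_pos hv] at h; exact absurd h (by simp)
    · rw [if_neg hu, if_neg hv] at h
      have h' : reach src tgt (insert e S) u v := Quotient.exact (Option.some.inj h)
      rcases reach_insert_cases src tgt e S h' with g | ⟨g1, _⟩ | ⟨_, g2⟩
      · exact Quotient.sound g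
      · exact absurd g1 hu
      · exact absurd (Relation.EqvGen.symm _ _ g2) hv
  calc nComp src tgt S ≤ Nat.card (Option (Quotient s')) :=
        Nat.card_le_card_of_injective _ hinj
    _ = nComp src tgt (insert e S) + 1 := by
        rw [nComp, Nat.card_eq_fintype_card, Nat.card_eq_fintype_card,
          Fintype.card_option]

lemma nComp_empty (src tgt : E → V) [Fintype V] :
    nComp src tgt (∅ : Finset E) = Fintype.card V := by
  rw [nComp, Nat.card_eq_fintype_card]
  have hbij : Function.Bijective
      (Quotient.mk (Relation.EqvGen.setoid (adjRel src tgt (∅ : Finset E)))) := by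
    constructor
    · intro u v h
      have h' : reach src tgt (∅ : Finset E) u v := Quotient.exact h
      have : Relation.EqvGen (Eq : V → V → Prop) u v :=
        h'.mono fun x y ⟨f, hf, _⟩ => absurd hf (Finset.notMem_empty f)
      exact (Equivalence.eqvGen_iff eq_equivalence).mp this
    · exact Quotient.mk''_surjective
  exact (Fintype.card_of_bijective hbij).symm

lemma card_le_nComp_add (src tgt : E → V) [Fintype V] (S : Finset E) :
    Fintype.card V ≤ nComp src tgt S + S.card := by
  classical
  induction S using Finset.induction_on with
  | empty => simp [nComp_empty]
  | @insert e S he ih =>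
      calc Fintype.card V ≤ nComp src tgt S + S.card := ih
        _ ≤ (nComp src tgt (insert e S) + 1) + S.card :=
            Nat.add_le_add_right (nComp_le_insert src tgt e S) _
        _ = nComp src tgt (insert e S) + (insert e S).card := by
            rw [Finset.card_insert_of_notMem he]; ring

lemma reach_of_nComp_one (src tgt : E → V) [Fintype V] {S : Finset E}
    (h : nComp src tgt S = 1) (u v : V) : reach src tgt S u v := by
  set s : Setoid V := Relation.EqvGen.setoid (adjRel src tgt S) with hs
  have h' : Nat.card (Quotient s) = 1 := h
  have hsub : Subsingleton (Quotient s) := (Nat.card_eq_one_iff_unique.mp h').1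
  have h2 : Quotient.mk s u = Quotient.mk s v := Subsingleton.elim _ _
  exact Quotient.exact h2

lemma nComp_eq_one (src tgt : E → V) [Fintype V] [Nonempty V] {S : Finset E}
    (h : ∀ u v : V, reach src tgt S u v) : nComp src tgt S = 1 := by
  show Nat.card (Quotient (Relation.EqvGen.setoid (adjRel src tgt S))) = 1
  refine Nat.card_eq_one_iff_unique.mpr ⟨⟨?_⟩, ⟨Quotient.mk _ (Classical.arbitrary V)⟩⟩
  intro x y
  exact Quotient.inductionOn₂ x y fun u v => Quotient.sound (h u v)

/-- For a spanning tree `T` and a spanning 2-forest `F` of a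
connected graph `G` with disjoint edge sets, there is an edge `e` of `T` such
that `F + e` is a spanning tree and `T - e` is a spanning 2-forest. -/
theorem stmt_1 [Fintype V] [Fintype E] (src tgt : E → V)
    (hconn : nComp src tgt (Finset.univ : Finset E) = 1)
    (T F : Finset E)
    (hT : IsSpanningTree src tgt T) (hF : IsSpanning2Forest src tgt F)
    (hdisj : Disjoint (T : Finset E) F) :
    ∃ e ∈ T, IsSpanningTree src tgt (insert e F) ∧
      IsSpanning2Forest src tgt (T.erase e) := by
  obtain ⟨hT1, hT2⟩ := hT
  obtain ⟨hF1, hF2⟩ := hF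
  set sF : Setoid V := Relation.EqvGen.setoid (adjRel src tgt F) with hsF
  -- V is nonempty
  have hVpos : 0 < Fintype.card V := by omega
  have : Nonempty V := Fintype.card_pos_iff.mp hVpos
  -- F has two distinct components
  have hcard2 : Nat.card (Quotient sF) = 2 := hF1
  have hnontriv : ∃ x y : Quotient sF, x ≠ y := by
    by_contra hc
    push_neg at hc
    have h1 : Nat.card (Quotient sF) = 1 :=
      Nat.card_eq_one_iff_unique.mpr ⟨⟨hc⟩, ⟨Quotient.mk sF (Classical.arbitrary V)⟩⟩
    omega
  obtain ⟨x, y, hxy⟩ := hnontriv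
  obtain ⟨p, rfl⟩ := Quotient.exists_rep x
  obtain ⟨q, rfl⟩ := Quotient.exists_rep y
  have hpq : ¬ reach src tgt F p q := fun h => hxy (Quotient.sound h)
  -- there is an edge of T joining the two components of F
  have hexists : ∃ e ∈ T, ¬ reach src tgt F (src e) (tgt e) := by
    by_contra hc
    push_neg at hc
    have hsubF : ∀ u v : V, adjRel src tgt T u v → reach src tgt F u v := by
      rintro u v ⟨f, hf, ⟨rfl, rfl⟩ | ⟨rfl, rfl⟩⟩
      · exact hc f hf
      · exact Relation.EqvGen.symm _ _ (hc f hf)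
    have : reach src tgt F p q :=
      (Equivalence.eqvGen_iff (Relation.EqvGen.is_equivalence _)).mp
        ((reach_of_nComp_one src tgt hT1 p q).mono hsubF)
    exact hpq this
  obtain ⟨e, heT, hne⟩ := hexists
  have heF : e ∉ F := Finset.disjoint_left.mp hdisj heT
  -- every vertex reaches src e or tgt e within F
  have hcover : ∀ v : V, reach src tgt F v (src e) ∨ reach src tgt F v (tgt e) := by
    intro v
    by_contra hc
    push_neg at hc
    obtain ⟨hva, hvb⟩ := hc
    have h1 : (Quotient.mk sF v : Quotient sF) ≠ Quotient.mk sF (src e) :=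
      fun h => hva (Quotient.exact h)
    have h2 : (Quotient.mk sF v : Quotient sF) ≠ Quotient.mk sF (tgt e) :=
      fun h => hvb (Quotient.exact h)
    have h3 : (Quotient.mk sF (src e) : Quotient sF) ≠ Quotient.mk sF (tgt e) :=
      fun h => hne (Quotient.exact h)
    have h4 : 3 ≤ Nat.card (Quotient sF) := by
      rw [Nat.card_eq_fintype_card]
      have h4 := Finset.card_le_univ
        ({Quotient.mk sF v, Quotient.mk sF (src e), Quotient.mk sF (tgt e)} :
          Finset (Quotient sF))
      rwa [Finset.card_insert_of_notMem (by simp [h1, h2]),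
        Finset.card_insert_of_notMem (by simp [h3]), Finset.card_singleton] at h4
    omega
  -- insert e F is a spanning tree
  have hEdge : reach src tgt (insert e F) (src e) (tgt e) :=
    Relation.EqvGen.rel _ _ ⟨e, Finset.mem_insert_self e F, Or.inl ⟨rfl, rfl⟩⟩
  have htotal : ∀ u v : V, reach src tgt (insert e F) u v := by
    have mn : ∀ {u v : V}, reach src tgt F u v → reach src tgt (insert e F) u v :=
      fun h => reach_mono src tgt (Finset.subset_insert e F) h
    have tr := fun {x y z : V} (h1 : reach src tgt (insert e F) x y)
      (h2 : reach src tgt (insert e F) y z) => Relation.EqvGen.trans x y z h1 h2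
    intro u v
    rcases hcover u with hu | hu <;> rcases hcover v with hv | hv
    · exact tr (mn hu) (mn hv).symm
    · exact tr (mn hu) (tr hEdge (mn hv).symm)
    · exact tr (mn hu) (tr hEdge.symm (mn hv).symm)
    · exact tr (mn hu) (mn hv).symm
  have hFe1 : nComp src tgt (insert e F) = 1 := nComp_eq_one src tgt htotal
  have hFe2 : (insert e F).card + 1 = Fintype.card V := by
    rw [Finset.card_insert_of_notMem heF]; omega
  -- T.erase e is a spanning 2-forest
  have hTcard : (T.erase e).card + 1 = T.card := by
    rw [Finset.card_erase_of_mem heT]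
    have : 1 ≤ T.card := Finset.card_pos.mpr ⟨e, heT⟩
    omega
  have hle : nComp src tgt (T.erase e) ≤ 2 := by
    have h := nComp_le_insert src tgt e (T.erase e)
    rwa [Finset.insert_erase heT, hT1] at h
  have hge : 2 ≤ nComp src tgt (T.erase e) := by
    have h := card_le_nComp_add src tgt (T.erase e)
    omega
  exact ⟨e, heT, ⟨hFe1, hFe2⟩, ⟨le_antisymm hle hge, by omega⟩⟩
end

section
/- Any two distinct maximal saturated subsets of vertices of a graph G_0 (maximal subsets X with G_0[X] having exactly 2|X|-2 edges and both of two given complementary acyclic spanning subgraphs restricting to trees on X) are disjoint. Consequently, the maximal saturated subsets form a partition of the vertex set. -/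
open Finset Matrix
open scoped Classical

variable {V E : Type*}

/-!
Restricted to a nonempty `X`, each of the two forests has at most `|X| - 1` edges, because the
edges of `S[X]` leave at least `|V| - |X| + 1` components and each further edge of `S` removes at
most one. Hence every nonempty `X` spans at most `2|X| - 2` edges, with equality exactly for
saturated sets. The induced edge count `i(X)` is supermodular, so for saturated `X`, `Y` that meet,
`i(X ∪ Y) + i(X ∩ Y) ≥ 2|X ∪ Y| + 2|X ∩ Y| - 4`, and the bound on `X ∩ Y` forces `X ∪ Y` to be
saturated; distinct maximal saturated sets therefore cannot meet. Singletons are saturated by the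
same bound, so every vertex lies in a maximal one.
-/

lemma Nat.card_le_card_add_one_of_injOn_compl_singleton {α β : Type*} [Finite α] [Finite β]
    {f : α → β} {a : α} (hf : Set.InjOn f {a}ᶜ) : Nat.card α ≤ Nat.card β + 1 := by
  have hle : ({a}ᶜ : Set α).ncard ≤ (Set.univ : Set β).ncard :=
    Set.ncard_le_ncard_of_injOn f (fun _ _ => Set.mem_univ _) hf
  have hcompl : ({a}ᶜ : Set α).ncard + 1 = Nat.card α := by
    rw [Set.ncard_compl, Set.ncard_singleton]
    have : 0 < Nat.card α := Nat.card_pos_iff.mpr ⟨⟨a⟩, inferInstance⟩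
    omega
  rw [Set.ncard_univ] at hle
  omega

lemma Equivalence.glue {α : Type*} {r : α → α → Prop} (hr : Equivalence r) (a b : α) :
    Equivalence fun u v => r u v ∨ ((r u a ∨ r u b) ∧ (r v a ∨ r v b)) where
  refl u := Or.inl (hr.refl u)
  symm := by
    rintro u v (h | ⟨hu, hv⟩)
    exacts [Or.inl (hr.symm h), Or.inr ⟨hv, hu⟩]
  trans := by
    rintro u v w (huv | ⟨hu, hv⟩) (hvw | ⟨hv', hw⟩)
    · exact Or.inl (hr.trans huv hvw)
    · exact Or.inr ⟨hv'.imp (hr.trans huv) (hr.trans huv), hw⟩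
    · exact Or.inr ⟨hu, hv.imp (hr.trans (hr.symm hvw)) (hr.trans (hr.symm hvw))⟩
    · exact Or.inr ⟨hu, hw⟩

section Components

variable (src tgt : E → V)

lemma adjRel_mono {S S' : Finset E} (h : S ⊆ S') {u v : V} :
    adjRel src tgt S u v → adjRel src tgt S' u v := by
  rintro ⟨e, he, hor⟩
  exact ⟨e, h he, hor⟩

variable [Finite V]

lemma nComp_le_nComp_insert_add_one (e : E) (S : Finset E) :
    nComp src tgt S ≤ nComp src tgt (insert e S) + 1 := by
  set r := Relation.EqvGen (adjRel src tgt S)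
  have hr : Equivalence r := Relation.EqvGen.is_equivalence _
  have hglue : ∀ u v, Relation.EqvGen (adjRel src tgt (insert e S)) u v →
      r u v ∨ ((r u (src e) ∨ r u (tgt e)) ∧ (r v (src e) ∨ r v (tgt e))) := by
    refine fun u v h => (hr.glue _ _).eqvGen_iff.mp (Relation.EqvGen.mono ?_ _ _ h)
    rintro u v ⟨e', he', hor⟩
    rcases Finset.mem_insert.mp he' with rfl | he'
    · rcases hor with ⟨rfl, rfl⟩ | ⟨rfl, rfl⟩
      exacts [Or.inr ⟨Or.inl (hr.refl _), Or.inr (hr.refl _)⟩,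
        Or.inr ⟨Or.inr (hr.refl _), Or.inl (hr.refl _)⟩]
    · exact Or.inl (Relation.EqvGen.rel _ _ ⟨e', he', hor⟩)
  let f := Quotient.lift (s := Relation.EqvGen.setoid (adjRel src tgt S))
    (Quotient.mk (Relation.EqvGen.setoid (adjRel src tgt (insert e S))))
    fun u v h => Quotient.sound (Relation.EqvGen.mono (fun _ _ => adjRel_mono src tgt
      (Finset.subset_insert e S)) _ _ h)
  refine Nat.card_le_card_add_one_of_injOn_compl_singleton (f := f)
    (a := Quotient.mk _ (tgt e)) ?_
  rintro ⟨u⟩ hu ⟨v⟩ hv huv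
  have hu : ¬ r u (tgt e) := fun h => hu (Quotient.sound h)
  have hv : ¬ r v (tgt e) := fun h => hv (Quotient.sound h)
  rcases hglue u v (Quotient.exact huv) with h | ⟨hu' | hu', hv' | hv'⟩
  · exact Quotient.sound h
  · exact Quotient.sound (hr.trans hu' (hr.symm hv'))
  all_goals contradiction

lemma nComp_le_nComp_union_add_card (S T : Finset E) :
    nComp src tgt S ≤ nComp src tgt (T ∪ S) + T.card := by
  induction T using Finset.induction_on with
  | empty => simp
  | @insert e T heT ih =>
    have := nComp_le_nComp_insert_add_one src tgt e (T ∪ S)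
    rw [Finset.insert_union, Finset.card_insert_of_notMem heT]
    omega

lemma card_add_one_le_nComp_add_card {S : Finset E} {X : Finset V} (hX : X.Nonempty)
    (hS : ∀ e ∈ S, src e ∈ X ∧ tgt e ∈ X) :
    Nat.card V + 1 ≤ nComp src tgt S + X.card := by
  obtain ⟨x₀, hx₀⟩ := hX
  let collapse : V → V := fun v => if v ∈ X then x₀ else v
  have hcollapse : ∀ u v, Relation.EqvGen (adjRel src tgt S) u v → collapse u = collapse v := by
    refine fun u v h => (InvImage.equivalence (· = ·) collapse eq_equivalence).eqvGen_iff.mp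
      (Relation.EqvGen.mono ?_ _ _ h)
    rintro a b ⟨e, he, hab⟩
    obtain ⟨hs, ht⟩ := hS e he
    rcases hab with ⟨rfl, rfl⟩ | ⟨rfl, rfl⟩ <;> simp [InvImage, collapse, hs, ht]
  have hinj : Set.InjOn (Quotient.mk (Relation.EqvGen.setoid (adjRel src tgt S)))
      (insert x₀ (↑X)ᶜ) := by
    intro u hu v hv huv
    have := hcollapse u v (Quotient.exact huv)
    rcases hu with rfl | hu <;> rcases hv with rfl | hv <;>
      simp_all [collapse]
  have hle := Set.ncard_le_ncard_of_injOn _ (fun _ _ => Set.mem_univ _) hinj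
  rw [Set.ncard_univ, Set.ncard_insert_of_notMem (by simpa using hx₀), Set.ncard_compl,
    Set.ncard_coe_finset] at hle
  have := Set.ncard_le_card (X : Set V)
  rw [Set.ncard_coe_finset] at this
  unfold nComp
  omega

end Components

/-- Acyclicity of `S`, in counting form. -/
def IsForest (src tgt : E → V) (S : Finset E) : Prop :=
  nComp src tgt S + S.card = Nat.card V

lemma IsSpanningTree.isForest [Fintype V] {src tgt : E → V} {S : Finset E}
    (hS : IsSpanningTree src tgt S) : IsForest src tgt S := by
  rw [IsForest, Nat.card_eq_fintype_card]
  have := hS.1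
  have := hS.2
  omega

lemma IsSpanning2Forest.isForest [Fintype V] {src tgt : E → V} {S : Finset E}
    (hS : IsSpanning2Forest src tgt S) : IsForest src tgt S := by
  rw [IsForest, Nat.card_eq_fintype_card]
  have := hS.1
  have := hS.2
  omega

lemma IsForest.card_inducedEdges_add_one_le [Finite V] {src tgt : E → V} {S : Finset E}
    (hS : IsForest src tgt S) {X : Finset V} (hX : X.Nonempty) :
    (inducedEdges src tgt S X).card + 1 ≤ X.card := by
  set SX := inducedEdges src tgt S X
  have hsub : SX ⊆ S := Finset.filter_subset _ S
  have hlower := card_add_one_le_nComp_add_card src tgt (S := SX) hX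
    fun e he => (Finset.mem_filter.mp he).2
  have hupper := nComp_le_nComp_union_add_card src tgt SX (S \ SX)
  rw [Finset.sdiff_union_of_subset hsub, Finset.card_sdiff_of_subset hsub] at hupper
  have := Finset.card_le_card hsub
  unfold IsForest at hS
  omega

lemma card_inducedEdges_add_card_inducedEdges_le (src tgt : E → V) (S : Finset E)
    (X Y : Finset V) :
    (inducedEdges src tgt S X).card + (inducedEdges src tgt S Y).card ≤
      (inducedEdges src tgt S (X ∪ Y)).card + (inducedEdges src tgt S (X ∩ Y)).card := by
  have hunion : inducedEdges src tgt S X ∪ inducedEdges src tgt S Y ⊆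
      inducedEdges src tgt S (X ∪ Y) := by
    intro e
    simp only [inducedEdges, Finset.mem_union, Finset.mem_filter]
    tauto
  have hinter : inducedEdges src tgt S X ∩ inducedEdges src tgt S Y =
      inducedEdges src tgt S (X ∩ Y) := by
    ext e
    simp only [inducedEdges, Finset.mem_inter, Finset.mem_filter]
    tauto
  rw [← Finset.card_union_add_card_inter, hinter]
  exact Nat.add_le_add_right (Finset.card_le_card hunion) _

section Saturated

variable [Fintype E] {src tgt : E → V}

/-- `(2,2)`-sparsity; the saturated sets are then the tight ones. -/
def IsSparse (src tgt : E → V) : Prop :=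
  ∀ X : Finset V, X.Nonempty → (inducedEdges src tgt Finset.univ X).card + 2 ≤ 2 * X.card

lemma isSparse_of_union_isForest [Finite V] {T F : Finset E} (hT : IsForest src tgt T)
    (hF : IsForest src tgt F) (hTF : T ∪ F = Finset.univ) : IsSparse src tgt := by
  intro X hX
  have hsplit : inducedEdges src tgt Finset.univ X =
      inducedEdges src tgt T X ∪ inducedEdges src tgt F X := by
    rw [inducedEdges, inducedEdges, inducedEdges, ← Finset.filter_union, hTF]
  have := Finset.card_union_le (inducedEdges src tgt T X) (inducedEdges src tgt F X)
  have := hT.card_inducedEdges_add_one_le hX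
  have := hF.card_inducedEdges_add_one_le hX
  rw [hsplit]
  omega

lemma IsSparse.saturated_singleton (hsp : IsSparse src tgt) (v : V) :
    Saturated src tgt {v} := by
  have := hsp {v} (Finset.singleton_nonempty v)
  rw [Finset.card_singleton] at this
  exact ⟨Finset.singleton_nonempty v, by rw [Finset.card_singleton]; omega⟩

lemma IsSparse.saturated_union (hsp : IsSparse src tgt) {X Y : Finset V}
    (hX : Saturated src tgt X) (hY : Saturated src tgt Y) (hXY : (X ∩ Y).Nonempty) :
    Saturated src tgt (X ∪ Y) := by
  have hXuY : (X ∪ Y).Nonempty := hX.1.mono Finset.subset_union_left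
  have := hsp _ hXY
  have := hsp _ hXuY
  have := card_inducedEdges_add_card_inducedEdges_le src tgt Finset.univ X Y
  have := Finset.card_union_add_card_inter X Y
  have := hX.2
  have := hY.2
  exact ⟨hXuY, by omega⟩

end Saturated

theorem stmt_3_general [Fintype V] [Fintype E] (src tgt : E → V)
    (hG : ∃ T F : Finset E, IsSpanningTree src tgt T ∧ IsSpanning2Forest src tgt F ∧
      Disjoint T F ∧ T ∪ F = Finset.univ) :
    (∀ X X' : Finset V,
      (Saturated src tgt X ∧ ∀ Z, Saturated src tgt Z → X ⊆ Z → X = Z) →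
      (Saturated src tgt X' ∧ ∀ Z, Saturated src tgt Z → X' ⊆ Z → X' = Z) →
      X ≠ X' → Disjoint X X') ∧
    (∀ v : V, ∃ X : Finset V,
      (Saturated src tgt X ∧ ∀ Z, Saturated src tgt Z → X ⊆ Z → X = Z) ∧ v ∈ X) := by
  obtain ⟨T, F, hT, hF, -, hTF⟩ := hG
  have hsp : IsSparse src tgt := isSparse_of_union_isForest hT.isForest hF.isForest hTF
  refine ⟨fun X X' ⟨hX, hXmax⟩ ⟨hX', hX'max⟩ hne => ?_, fun v => ?_⟩
  · by_contra hXX'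
    have hU := hsp.saturated_union hX hX' (Finset.not_disjoint_iff_nonempty_inter.mp hXX')
    exact hne ((hXmax _ hU Finset.subset_union_left).trans
      (hX'max _ hU Finset.subset_union_right).symm)
  · obtain ⟨X, hvX, hXmax⟩ := Finite.exists_le_maximal (hsp.saturated_singleton v)
    exact ⟨X, ⟨hXmax.1, fun Z hZ hXZ => le_antisymm hXZ (hXmax.2 hZ hXZ)⟩,
      Finset.singleton_subset_iff.mp hvX⟩

/-- In a connected multigraph whose edge set is the disjoint union
of a spanning tree and a spanning 2-forest, any two distinct maximal saturated
subsets of vertices are disjoint, and every vertex lies in a maximal saturated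
subset: the maximal saturated subsets partition `V`. -/
theorem stmt_3 [Fintype V] [Fintype E] (src tgt : E → V)
    (hconn : nComp src tgt (Finset.univ : Finset E) = 1)
    (hG : ∃ T F : Finset E, IsSpanningTree src tgt T ∧ IsSpanning2Forest src tgt F ∧
      Disjoint T F ∧ T ∪ F = Finset.univ) :
    (∀ X X' : Finset V,
      (Saturated src tgt X ∧ ∀ Z, Saturated src tgt Z → X ⊆ Z → X = Z) →
      (Saturated src tgt X' ∧ ∀ Z, Saturated src tgt Z → X' ⊆ Z → X' = Z) →
      X ≠ X' → Disjoint X X') ∧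
    (∀ v : V, ∃ X : Finset V,
      (Saturated src tgt X ∧ ∀ Z, Saturated src tgt Z → X ⊆ Z → X = Z) ∧ v ∈ X) :=
  stmt_3_general src tgt hG
end
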